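/- The matrix T maps Y into X: for every point q ∈ X and every i ∈ {1,2,3}, the vector T·Rⁱ·q lies in X. Consequently X and Y form a valid ping-pong table for ⟨R⟩ and ⟨T⟩. -/

import Mathlib

open Matrix

/-- The matrix `R`. -/
def R : Matrix (Fin 3) (Fin 3) ℝ := !![0,0,-1; 1,0,-1; 0,1,-1]

/-- The matrix `T`. -/
def T : Matrix (Fin 3) (Fin 3) ℝ := !![-1,0,0; 2,1,0; -4,0,1]

/-- The vector `u = (1,-2,1)`. -/
def u : Fin 3 → ℝ := ![1,-2,1]

/-- The vector `v = (1,0,3)`. -/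
def v : Fin 3 → ℝ := ![1,0,3]

/-- The vector `w = (0,-1,1)`. -/
def w : Fin 3 → ℝ := ![0,-1,1]

/-- The open cone `C` generated by `u`, `v`, `w`. -/
def C : Set (Fin 3 → ℝ) :=
  {p | ∃ a b c : ℝ, 0 < a ∧ 0 < b ∧ 0 < c ∧ p = a • u + b • v + c • w}

/-- `X = C ∪ (−C)`. -/
def X : Set (Fin 3 → ℝ) := C ∪ (-C)

/-- `Y = R·X ∪ R²·X ∪ R³·X`. -/
def Y : Set (Fin 3 → ℝ) :=
  R.mulVec '' X ∪ (R ^ 2).mulVec '' X ∪ (R ^ 3).mulVec '' X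

/-!
In the basis `u, v, w`, the maps `T R`, `T R²`, `T R³` have matrices with nonnegative entries
and no zero row, so `T R` and `T R³` map the open cone `C` into itself and `T R²` maps it into
`-C`. Since these maps are linear they commute with `p ↦ -p`, hence send `X = C ∪ -C` into `X`.
Finally `T · (Rⁱ q) = (T Rⁱ) q`, so `T` maps `Y` into `X`.
-/

theorem Set.mapsTo_union_neg {E F : Type*} [InvolutiveNeg E] [InvolutiveNeg F] {f : E → F}
    (hf : ∀ x, f (-x) = -f x) {S : Set E} {S' : Set F} (h : Set.MapsTo f S (S' ∪ -S')) :
    Set.MapsTo f (S ∪ -S) (S' ∪ -S') := by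
  rintro x (hx | hx)
  · exact h hx
  · have hfx : -f x ∈ S' ∪ -S' := hf x ▸ h hx
    rwa [← Set.mem_neg, Set.union_neg, neg_neg, Set.union_comm] at hfx

lemma smul_add_smul_add_smul_mem_C {a b c : ℝ} (ha : 0 < a) (hb : 0 < b) (hc : 0 < c) :
    a • u + b • v + c • w ∈ C :=
  ⟨a, b, c, ha, hb, hc, rfl⟩

lemma T_mul_R_mulVec (a b c : ℝ) :
    (T * R ^ 1).mulVec (a • u + b • v + c • w)
      = (a + 2 * b + c) • u + b • v + (4 * b + c) • w := by
  ext i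
  fin_cases i <;>
    simp [T, R, u, v, w, Matrix.mulVec, Matrix.mul_apply, dotProduct, Fin.sum_univ_three,
      pow_succ] <;> ring

lemma T_mul_R_sq_mulVec (a b c : ℝ) :
    (T * R ^ 2).mulVec (a • u + b • v + c • w)
      = -((2 * a + b + c) • u + (a + 2 * b + c) • v + (4 * a + 4 * b + 3 * c) • w) := by
  ext i
  fin_cases i <;>
    simp [T, R, u, v, w, Matrix.mulVec, Matrix.mul_apply, dotProduct, Fin.sum_univ_three,
      pow_succ] <;> ring

lemma T_mul_R_cube_mulVec (a b c : ℝ) :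
    (T * R ^ 3).mulVec (a • u + b • v + c • w)
      = a • u + (2 * a + b + c) • v + (4 * a + c) • w := by
  ext i
  fin_cases i <;>
    simp [T, R, u, v, w, Matrix.mulVec, Matrix.mul_apply, dotProduct, Fin.sum_univ_three,
      pow_succ] <;> ring

lemma mapsTo_T_mul_R_pow_C_X {i : ℕ} (hi : i ∈ ({1, 2, 3} : Set ℕ)) :
    Set.MapsTo (T * R ^ i).mulVec C X := by
  rintro _ ⟨a, b, c, ha, hb, hc, rfl⟩
  rcases hi with rfl | rfl | rfl
  · rw [T_mul_R_mulVec]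
    exact Or.inl (smul_add_smul_add_smul_mem_C (by positivity) hb (by positivity))
  · rw [T_mul_R_sq_mulVec]
    refine Or.inr (Set.neg_mem_neg.mpr ?_)
    exact smul_add_smul_add_smul_mem_C (by positivity) (by positivity) (by positivity)
  · rw [T_mul_R_cube_mulVec]
    exact Or.inl (smul_add_smul_add_smul_mem_C ha (by positivity) (by positivity))

lemma mapsTo_T_mul_R_pow_X {i : ℕ} (hi : i ∈ ({1, 2, 3} : Set ℕ)) :
    Set.MapsTo (T * R ^ i).mulVec X X :=
  Set.mapsTo_union_neg (fun _ => Matrix.mulVec_neg _ _) (mapsTo_T_mul_R_pow_C_X hi)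

lemma exists_eq_R_pow_mulVec_of_mem_Y {y : Fin 3 → ℝ} (hy : y ∈ Y) :
    ∃ i ∈ ({1, 2, 3} : Set ℕ), ∃ q ∈ X, y = (R ^ i).mulVec q := by
  rcases hy with (⟨q, hq, rfl⟩ | ⟨q, hq, rfl⟩) | ⟨q, hq, rfl⟩
  · exact ⟨1, by simp, q, hq, by rw [pow_one]⟩
  · exact ⟨2, by simp, q, hq, rfl⟩
  · exact ⟨3, by simp, q, hq, rfl⟩

/-- `T` maps `Y` into `X`: for every `q ∈ X` and `i ∈ {1,2,3}`, the vector
`T·Rⁱ·q` lies in `X`; consequently `T` maps `Y` into `X`, so `X` and `Y` form a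
valid ping-pong table for `⟨R⟩` and `⟨T⟩`. -/
theorem T_maps_Y_into_X :
    (∀ i ∈ ({1, 2, 3} : Set ℕ), ∀ q ∈ X, (T * R ^ i).mulVec q ∈ X) ∧
    (∀ y ∈ Y, T.mulVec y ∈ X) := by
  refine ⟨fun i hi q hq => mapsTo_T_mul_R_pow_X hi hq, fun y hy => ?_⟩
  obtain ⟨i, hi, q, hq, rfl⟩ := exists_eq_R_pow_mulVec_of_mem_Y hy
  rw [Matrix.mulVec_mulVec]
  exact mapsTo_T_mul_R_pow_X hi hq
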